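/- arXiv:2305.02406 — 7 statements merged into one kernel-verified Lean document; each statement's English description precedes it below -/
import Mathlib

section
/- Let G be a graph on [n], 2 ≤ k ≤ n, and σ a k-subset of [n]. Then ∑_{u ∈ σ} d_{k−1}(σ∖{u}) = (k−1)·d_k(σ) + 2·|E_σ|, where d_j denotes the degree in the j-th token graph F_j(G) and E_σ = {e ∈ E(G) : e ⊆ σ}. -/
open Finset

/-- The `k`-th token graph of a graph `G` on `[n]` = `Fin n`: vertices are the `k`-subsets of
`[n]`, and `A, B` are adjacent iff `|A ∩ B| = k - 1` and `A △ B` is an edge of `G`. -/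
def tokenGraph (n k : ℕ) (G : SimpleGraph (Fin n)) :
    SimpleGraph {s : Finset (Fin n) // s.card = k} :=
  SimpleGraph.fromRel (fun A B =>
    (A.1 ∩ B.1).card = k - 1 ∧ ∃ u v, G.Adj u v ∧ symmDiff A.1 B.1 = {u, v})

noncomputable instance (n k : ℕ) (G : SimpleGraph (Fin n)) :
    DecidableRel (tokenGraph n k G).Adj := Classical.decRel _

/-- Laplacian matrix of the `k`-th token graph. -/
noncomputable def lapTok (n k : ℕ) (G : SimpleGraph (Fin n)) :
    Matrix {s : Finset (Fin n) // s.card = k} {s : Finset (Fin n) // s.card = k} ℝ :=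
  SimpleGraph.lapMatrix ℝ (tokenGraph n k G)

/-! A `j`-set `A` is adjacent in `F_j(G)` exactly to the sets `A - a + b` with `a ∈ A`, `b ∉ A`
and `ab ∈ E(G)`, and distinct pairs `(a, b)` give distinct sets, so `d_j(A)` is the number of
ordered edges `(a, b)` leaving `A`. An ordered edge `(a, b)` leaves `σ - u` for the `k - 1`
choices `u ≠ a` if it leaves `σ`, for the single choice `u = b` if it lies inside `σ`, and for no
`u` otherwise; the ordered edges inside `σ` number `2 |E_σ|`. -/

namespace Finset
variable {α : Type*} [DecidableEq α] {s t : Finset α} {a b : α}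

lemma sdiff_insert_erase (ha : a ∈ s) (hb : b ∉ s) : s \ insert b (s.erase a) = {a} := by
  grind

lemma insert_erase_sdiff (hb : b ∉ s) : insert b (s.erase a) \ s = {b} := by
  grind

lemma eq_insert_erase_of_sdiff_eq_singleton (hs : s \ t = {a}) (ht : t \ s = {b}) :
    t = insert b (s.erase a) := by
  ext x
  have hsx := congrArg (x ∈ ·) hs
  have htx := congrArg (x ∈ ·) ht
  simp only [mem_sdiff, mem_singleton, eq_iff_iff] at hsx htx
  grind

lemma card_insert_erase (ha : a ∈ s) (hb : b ∉ s) : #(insert b (s.erase a)) = #s := by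
  grind

lemma card_filter_mem_erase_notMem_erase (hab : a ≠ b) (s : Finset α) :
    #{u ∈ s | a ∈ s.erase u ∧ b ∉ s.erase u} =
      (if a ∈ s ∧ b ∉ s then #s - 1 else 0) + if a ∈ s ∧ b ∈ s then 1 else 0 := by
  by_cases ha : a ∈ s
  · by_cases hb : b ∈ s
    · have : {u ∈ s | a ∈ s.erase u ∧ b ∉ s.erase u} = {b} := by grind
      rw [this]; simp [ha, hb]
    · have : {u ∈ s | a ∈ s.erase u ∧ b ∉ s.erase u} = s.erase a := by grind
      rw [this]; simp [ha, hb]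
  · have : {u ∈ s | a ∈ s.erase u ∧ b ∉ s.erase u} = ∅ := by grind
    rw [this]; simp [ha]

end Finset

namespace SimpleGraph
variable {V : Type*} [Fintype V] [DecidableEq V] (G : SimpleGraph V) [DecidableRel G.Adj]

variable {G} in
lemma exists_mem_interedges_of_symmDiff_eq_pair {s t : Finset V} (hst : #s = #t)
    {u v : V} (huv : G.Adj u v) (h : symmDiff s t = {u, v}) :
    ∃ p ∈ G.interedges s sᶜ, t = insert p.2 (s.erase p.1) := by
  have hcard : #(s \ t) + #(t \ s) = 2 := by
    rw [← card_union_of_disjoint disjoint_sdiff_sdiff, ← sup_eq_union, ← symmDiff_def, h,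
      card_pair huv.ne]
  obtain ⟨a, ha⟩ := card_eq_one.1 (show #(s \ t) = 1 by have := card_sdiff_comm hst; omega)
  obtain ⟨b, hb⟩ := card_eq_one.1 (show #(t \ s) = 1 by have := card_sdiff_comm hst; omega)
  have has := congrArg (a ∈ ·) ha
  have hbt := congrArg (b ∈ ·) hb
  simp only [mem_sdiff, mem_singleton, eq_iff_iff, iff_true] at has hbt
  have hpair : ({a, b} : Finset V) = {u, v} := by
    rw [← h, symmDiff_def, sup_eq_union, ha, hb, insert_eq]
  have hadj : G.Adj a b := by
    have hau := congrArg (a ∈ ·) hpair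
    have hbu := congrArg (b ∈ ·) hpair
    simp only [mem_insert, mem_singleton, true_or, or_true, eq_iff_iff, true_iff] at hau hbu
    have hab : a ≠ b := by rintro rfl; exact hbt.2 has.1
    rcases hau with rfl | rfl <;> rcases hbu with rfl | rfl
    all_goals first | exact absurd rfl hab | exact huv | exact huv.symm
  exact ⟨(a, b), G.mk_mem_interedges_iff.2 ⟨has.1, mem_compl.2 hbt.2, hadj⟩,
    eq_insert_erase_of_sdiff_eq_singleton ha hb⟩

lemma two_mul_card_edgeFinset_filter_subset (σ : Finset V)
    [DecidablePred fun e : Sym2 V => ∀ v ∈ e, v ∈ σ] :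
    2 * #{e ∈ G.edgeFinset | ∀ v ∈ e, v ∈ σ} = #(G.interedges σ σ) := by
  classical
  let H := G.deleteEdges (↑σ.sym2)ᶜ
  have hH : H.edgeFinset = {e ∈ G.edgeFinset | ∀ v ∈ e, v ∈ σ} := by
    ext e; simp [H, ← mem_sym2_iff, -coe_sym2]
  rw [← hH, two_mul_card_edgeFinset]
  congr 1
  ext ⟨x, y⟩
  simp [H, mem_interedges_iff]
  tauto

lemma sum_card_interedges_erase (σ : Finset V) :
    ∑ u ∈ σ, #(G.interedges (σ.erase u) (σ.erase u)ᶜ) =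
      (#σ - 1) * #(G.interedges σ σᶜ) + #(G.interedges σ σ) := by
  let D : Finset (V × V) := {p | G.Adj p.1 p.2}
  have hD (s t : Finset V) : G.interedges s t = {p ∈ D | p.1 ∈ s ∧ p.2 ∈ t} := by
    ext p; simp [D, mem_interedges_iff]; tauto
  simp only [hD, card_filter]
  rw [sum_comm]
  calc ∑ p ∈ D, ∑ u ∈ σ, (if p.1 ∈ σ.erase u ∧ p.2 ∈ (σ.erase u)ᶜ then 1 else 0)
      = ∑ p ∈ D, ((if p.1 ∈ σ ∧ p.2 ∈ σᶜ then #σ - 1 else 0) +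
          if p.1 ∈ σ ∧ p.2 ∈ σ then 1 else 0) := by
        refine sum_congr rfl fun p hp => ?_
        simp only [mem_compl, ← card_filter]
        exact card_filter_mem_erase_notMem_erase (mem_filter.1 hp).2.ne σ
    _ = _ := by simp only [sum_add_distrib, mul_sum, mul_ite, mul_one, mul_zero]

end SimpleGraph

section
open SimpleGraph
variable {n j : ℕ} {G : SimpleGraph (Fin n)} [DecidableRel G.Adj]

lemma tokenGraph_adj_iff {A B : {s : Finset (Fin n) // #s = j}} :
    (tokenGraph n j G).Adj A B ↔
      ∃ p ∈ G.interedges A.1 A.1ᶜ, B.1 = insert p.2 (A.1.erase p.1) := by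
  simp only [tokenGraph, fromRel_adj]
  constructor
  · rintro ⟨-, ⟨-, u, v, huv, h⟩ | ⟨-, u, v, huv, h⟩⟩
    · exact exists_mem_interedges_of_symmDiff_eq_pair (A.2.trans B.2.symm) huv h
    · exact exists_mem_interedges_of_symmDiff_eq_pair (A.2.trans B.2.symm) huv
        (by rwa [symmDiff_comm])
  · rintro ⟨⟨a, b⟩, hp, hB⟩
    obtain ⟨ha, hb, hadj⟩ := G.mk_mem_interedges_iff.1 hp
    rw [mem_compl] at hb
    refine ⟨fun hAB => hb (hAB ▸ hB ▸ mem_insert_self ..), Or.inl ⟨?_, a, b, hadj, ?_⟩⟩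
    · have := card_sdiff_add_card_inter A.1 B.1
      rw [hB, sdiff_insert_erase ha hb, card_singleton, A.2] at this
      rw [hB]
      omega
    · rw [symmDiff_def, sup_eq_union, hB, sdiff_insert_erase ha hb, insert_erase_sdiff hb]
      rfl

lemma tokenGraph_degree (A : {s : Finset (Fin n) // #s = j}) :
    (tokenGraph n j G).degree A = #(G.interedges A.1 A.1ᶜ) := by
  let swap (p : Fin n × Fin n) : Finset (Fin n) := insert p.2 (A.1.erase p.1)
  have himage : ((tokenGraph n j G).neighborFinset A).map (Function.Embedding.subtype _) =
      (G.interedges A.1 A.1ᶜ).image swap := by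
    ext B
    simp only [mem_map, mem_neighborFinset, tokenGraph_adj_iff, Function.Embedding.coe_subtype,
      mem_image]
    constructor
    · rintro ⟨B, ⟨p, hp, hB⟩, rfl⟩
      exact ⟨p, hp, hB.symm⟩
    · rintro ⟨p, hp, rfl⟩
      obtain ⟨ha, hb, -⟩ := G.mem_interedges_iff.1 hp
      exact ⟨⟨swap p, (card_insert_erase ha (mem_compl.1 hb)).trans A.2⟩, ⟨p, hp, rfl⟩, rfl⟩
  have hinj : Set.InjOn swap (G.interedges A.1 A.1ᶜ) := by
    rintro ⟨a, b⟩ hp ⟨a', b'⟩ hp' h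
    obtain ⟨ha, hb, -⟩ := G.mk_mem_interedges_iff.1 hp
    obtain ⟨ha', hb', -⟩ := G.mk_mem_interedges_iff.1 hp'
    rw [mem_compl] at hb hb'
    have h' : insert b (A.1.erase a) = insert b' (A.1.erase a') := h
    have hfst := sdiff_insert_erase ha hb
    have hsnd := insert_erase_sdiff (a := a) hb
    rw [h', sdiff_insert_erase ha' hb'] at hfst
    rw [h', insert_erase_sdiff hb'] at hsnd
    rw [singleton_inj.1 hfst, singleton_inj.1 hsnd]
  rw [← card_neighborFinset_eq_degree, ← card_map, himage, card_image_of_injOn hinj]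

end

open scoped Classical in
/-- `∑_{u∈σ} d_{k-1}(σ \ {u}) = (k-1) d_k(σ) + 2 |E_σ|`. -/
theorem sum_degree_erase (n k : ℕ) (G : SimpleGraph (Fin n))
    (σ : {s : Finset (Fin n) // s.card = k}) :
    ∑ u ∈ σ.1.attach,
        (tokenGraph n (k - 1) G).degree
          ⟨σ.1.erase u.1, by rw [Finset.card_erase_of_mem u.2, σ.2]⟩ =
      (k - 1) * (tokenGraph n k G).degree σ +
        2 * (G.edgeFinset.filter (fun e => ∀ v ∈ e, v ∈ σ.1)).card := by
  simp only [tokenGraph_degree]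
  rw [sum_attach σ.1 fun u => #(G.interedges (σ.1.erase u) (σ.1.erase u)ᶜ),
    G.sum_card_interedges_erase, σ.2, G.two_mul_card_edgeFinset_filter_subset]
end

section
/- Let G be a graph on [n] and 1 ≤ k ≤ n. Then B_{n,k,k−1} · L_{k−1}(G) = L_k(G) · B_{n,k,k−1}, where B_{n,k,k−1} is the inclusion matrix with rows indexed by k-subsets and columns by (k−1)-subsets of [n], having entry 1 if the (k−1)-subset is contained in the k-subset and 0 otherwise, and L_j(G) is the Laplacian of the j-th token graph F_j(G). -/
/-!
An edge `uv` of `G` acts on `j`-subsets of `[n]` through the transposition `(u v)`, and two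
`j`-subsets are adjacent in `F_j(G)` exactly when such a transposition moves one to the other.
Counting every edge through its two darts, `2 L_j(G) = ∑_d (I - P_j(τ_d))`, where `P_j(τ)` is the
permutation matrix of `τ` acting on `j`-subsets. A permutation of `[n]` preserves inclusion, so
`B_{n,k,l} P_l(τ) = P_k(τ) B_{n,k,l}`, and summing over the darts gives
`B_{n,k,l} L_l(G) = L_k(G) B_{n,k,l}` for all `k` and `l`.
-/

open Finset

/-- The inclusion matrix `B_{n,k,l}` of `l`-subsets into `k`-subsets of `[n]`. -/
def inclMatrix (n k l : ℕ) :
    Matrix {s : Finset (Fin n) // s.card = k} {s : Finset (Fin n) // s.card = l} ℝ :=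
  fun σ η => if η.1 ⊆ σ.1 then 1 else 0

open Equiv
open scoped symmDiff Matrix

namespace Finset

variable {α : Type*} [DecidableEq α] {s t : Finset α} {a b : α}

theorem map_swap_eq_self_of_iff (h : a ∈ s ↔ b ∈ s) : s.map (swap a b).toEmbedding = s := by
  ext z
  rw [mem_map_equiv, symm_swap, swap_apply_def]
  grind

theorem symmDiff_map_swap_self (h : s.map (swap a b).toEmbedding ≠ s) :
    s ∆ s.map (swap a b).toEmbedding = {a, b} := by
  have hab : ¬(a ∈ s ↔ b ∈ s) := fun h' => h (map_swap_eq_self_of_iff h')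
  ext z
  rw [mem_symmDiff, mem_map_equiv, symm_swap, swap_apply_def, mem_insert, mem_singleton]
  grind

theorem map_swap_eq_of_symmDiff_eq_pair (hcard : #s = #t) (h : s ∆ t = {a, b}) :
    s.map (swap a b).toEmbedding = t := by
  have hmem : ∀ z, (z ∈ s ∧ z ∉ t ∨ z ∈ t ∧ z ∉ s) ↔ z = a ∨ z = b := fun z => by
    rw [← mem_symmDiff, h, mem_insert, mem_singleton]
  have hsdiff : (∀ z, ¬(z ∈ s ∧ z ∉ t)) ↔ ∀ z, ¬(z ∈ t ∧ z ∉ s) := by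
    simp only [← mem_sdiff, ← eq_empty_iff_forall_notMem, ← card_eq_zero, card_sdiff_comm hcard]
  -- if `a` and `b` were on the same side of `s ∆ t`, one of `s \ t`, `t \ s` would be empty
  have key : a ∈ s ↔ b ∈ t := by grind
  ext z
  rw [mem_map_equiv, symm_swap, swap_apply_def]
  grind

theorem card_inter_of_symmDiff_eq_pair (hcard : #s = #t) (h : s ∆ t = {a, b}) (hab : a ≠ b) :
    #(s ∩ t) = #s - 1 := by
  have h2 : #(s \ t) + #(t \ s) = 2 := by
    rw [← card_union_of_disjoint disjoint_sdiff_sdiff, ← Finset.symmDiff_def, h, card_pair hab]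
  have := card_inter_add_card_sdiff s t
  rw [card_sdiff_comm hcard] at h2 this
  omega

end Finset

theorem Sym2.toFinset_injective {α : Type*} [DecidableEq α] :
    Function.Injective (Sym2.toFinset : Sym2 α → Finset α) := fun _ _ h =>
  Sym2.ext fun x => by rw [← mem_toFinset, h, mem_toFinset]

theorem SimpleGraph.swap_eq_of_dart_edge_eq {V : Type*} [DecidableEq V] {G : SimpleGraph V}
    {d d' : G.Dart} (h : d.edge = d'.edge) : swap d.fst d.snd = swap d'.fst d'.snd := by
  rcases (G.dart_edge_eq_iff d d').1 h with rfl | rfl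
  · rfl
  · exact swap_comm _ _

theorem Matrix.eq_of_mulVec_const_eq_of_apply_eq_of_ne {ι R : Type*} [Fintype ι] [DecidableEq ι]
    [NonAssocRing R] {M N : Matrix ι ι R}
    (hrow : M *ᵥ (fun _ => 1) = N *ᵥ (fun _ => 1)) (hoff : ∀ i j, i ≠ j → M i j = N i j) :
    M = N := by
  ext i j
  by_cases hij : i = j
  · subst hij
    have hi := congrFun hrow i
    simp only [mulVec, dotProduct, mul_one] at hi
    rw [← add_sum_erase _ _ (mem_univ i), ← add_sum_erase _ _ (mem_univ i),
      sum_congr rfl fun j hj => hoff i j (ne_of_mem_erase hj).symm] at hi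
    exact add_right_cancel hi
  · exact hoff i j hij

section TokenGraph

open SimpleGraph

variable {n : ℕ}

def permTok (k : ℕ) (σ : Perm (Fin n)) : Perm {s : Finset (Fin n) // #s = k} :=
  σ.finsetCongr.subtypeEquiv fun s => by simp [finsetCongr_apply]

@[simp]
theorem coe_permTok (k : ℕ) (σ : Perm (Fin n)) (A : {s : Finset (Fin n) // #s = k}) :
    (permTok k σ A : Finset (Fin n)) = A.1.map σ.toEmbedding := rfl

theorem inclMatrix_mul_permMatrix (k l : ℕ) (σ : Perm (Fin n)) :
    inclMatrix n k l * (permTok l σ).permMatrix ℝ =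
      (permTok k σ).permMatrix ℝ * inclMatrix n k l := by
  rw [PEquiv.mul_toMatrix_toPEquiv, PEquiv.toMatrix_toPEquiv_mul]
  ext A S
  simp only [inclMatrix, Matrix.submatrix_apply, id, permTok, subtypeEquiv_symm,
    subtypeEquiv_apply, finsetCongr_symm, finsetCongr_apply, map_symm_subset]

variable {G : SimpleGraph (Fin n)} {k : ℕ}

theorem tokenGraph_adj_iff_s5 {A B : {s : Finset (Fin n) // #s = k}} :
    (tokenGraph n k G).Adj A B ↔ A ≠ B ∧ ∃ d : G.Dart, permTok k (swap d.fst d.snd) A = B := by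
  rw [tokenGraph, fromRel_adj]
  constructor
  · rintro ⟨hne, h⟩
    obtain ⟨u, v, huv, hAB⟩ : ∃ u v, G.Adj u v ∧ A.1 ∆ B.1 = {u, v} := by
      rcases h with ⟨-, h⟩ | ⟨-, u, v, huv, h⟩
      · exact h
      · exact ⟨u, v, huv, by rwa [symmDiff_comm]⟩
    have hmap := map_swap_eq_of_symmDiff_eq_pair (A.2.trans B.2.symm) hAB
    exact ⟨hne, ⟨(u, v), huv⟩, Subtype.ext hmap⟩
  · rintro ⟨hne, d, rfl⟩
    have hAB := symmDiff_map_swap_self fun h => hne (Subtype.ext h.symm)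
    refine ⟨hne, Or.inl ⟨?_, d.fst, d.snd, d.adj, hAB⟩⟩
    rw [coe_permTok, card_inter_of_symmDiff_eq_pair (by simp) hAB d.adj.ne, A.2]

theorem dart_edge_eq_of_permTok_eq {d d' : G.Dart} {A : {s : Finset (Fin n) // #s = k}}
    (hne : permTok k (swap d.fst d.snd) A ≠ A)
    (h : permTok k (swap d.fst d.snd) A = permTok k (swap d'.fst d'.snd) A) :
    d.edge = d'.edge := by
  have hne' : permTok k (swap d'.fst d'.snd) A ≠ A := h ▸ hne
  apply Sym2.toFinset_injective
  rw [Dart.edge, Dart.edge, Sym2.toFinset_mk_eq, Sym2.toFinset_mk_eq,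
    ← symmDiff_map_swap_self fun h => hne (Subtype.ext h),
    ← symmDiff_map_swap_self fun h => hne' (Subtype.ext h)]
  exact congrArg (fun B => A.1 ∆ B.1) h

variable [DecidableRel G.Adj]

theorem card_darts_permTok_eq {A B : {s : Finset (Fin n) // #s = k}} (hAB : A ≠ B) :
    #{d : G.Dart | permTok k (swap d.fst d.snd) A = B} =
      if (tokenGraph n k G).Adj A B then 2 else 0 := by
  split_ifs with hadj
  · obtain ⟨-, d₀, hd₀⟩ := tokenGraph_adj_iff_s5.1 hadj
    rw [← G.dart_edge_fiber_card d₀.edge d₀.edge_mem]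
    congr 1
    ext d
    simp only [mem_filter, mem_univ, true_and]
    constructor
    · intro hd
      exact (dart_edge_eq_of_permTok_eq (hd₀ ▸ hAB.symm) (hd₀.trans hd.symm)).symm
    · intro hd
      rw [swap_eq_of_dart_edge_eq hd, hd₀]
  · rw [card_eq_zero, filter_eq_empty_iff]
    exact fun d _ hd => hadj (tokenGraph_adj_iff_s5.2 ⟨hAB, d, hd⟩)

theorem two_smul_lapTok :
    (2 : ℝ) • lapTok n k G = ∑ d : G.Dart, (1 - (permTok k (swap d.fst d.snd)).permMatrix ℝ) := by
  apply Matrix.eq_of_mulVec_const_eq_of_apply_eq_of_ne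
  · rw [Matrix.smul_mulVec, lapTok, lapMatrix_mulVec_const_eq_zero, smul_zero, Matrix.sum_mulVec]
    simp only [Matrix.sub_mulVec, Matrix.one_mulVec, PEquiv.toMatrix_toPEquiv_mulVec]
    exact (sum_eq_zero fun d _ => sub_self _).symm
  · intro A B hAB
    simp only [Matrix.smul_apply, Matrix.sum_apply, Matrix.sub_apply, Matrix.one_apply_ne hAB,
      zero_sub, PEquiv.toMatrix_apply, toPEquiv_apply, Option.mem_def, Option.some.injEq]
    rw [sum_neg_distrib, sum_boole, card_darts_permTok_eq hAB, lapTok, lapMatrix,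
      Matrix.sub_apply, degMatrix, Matrix.diagonal_apply_ne _ hAB, adjMatrix_apply]
    split_ifs <;> norm_num

end TokenGraph

theorem inclMatrix_mul_lapTok (n k l : ℕ) (G : SimpleGraph (Fin n)) :
    inclMatrix n k l * lapTok n l G = lapTok n k G * inclMatrix n k l := by
  classical
  have h2 : (2 : ℝ) • (inclMatrix n k l * lapTok n l G) =
      (2 : ℝ) • (lapTok n k G * inclMatrix n k l) := by
    rw [← Matrix.mul_smul, ← Matrix.smul_mul, two_smul_lapTok, two_smul_lapTok, Matrix.mul_sum,
      Matrix.sum_mul]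
    refine sum_congr rfl fun d _ => ?_
    rw [Matrix.mul_sub, Matrix.sub_mul, Matrix.mul_one, Matrix.one_mul, inclMatrix_mul_permMatrix]
  exact smul_right_injective _ two_ne_zero h2

theorem incl_comm_lap_general (n k : ℕ) (G : SimpleGraph (Fin n)) :
    inclMatrix n k (k - 1) * lapTok n (k - 1) G = lapTok n k G * inclMatrix n k (k - 1) :=
  inclMatrix_mul_lapTok n k (k - 1) G

/-- `B_{n,k,k-1} L_{k-1}(G) = L_k(G) B_{n,k,k-1}`. -/
theorem incl_comm_lap (n k : ℕ) (G : SimpleGraph (Fin n)) (hk : 1 ≤ k) (hkn : k ≤ n) :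
    inclMatrix n k (k - 1) * lapTok n (k - 1) G = lapTok n k G * inclMatrix n k (k - 1) :=
  incl_comm_lap_general n k G
end

section
/- For 0 ≤ ℓ ≤ k ≤ ⌊n/2⌋, the inclusion matrix B_{n,k,ℓ} ∈ ℝ^{C(n,k) × C(n,ℓ)}, with entry 1 at (σ, η) iff η ⊆ σ, has full column rank C(n,ℓ). -/
/-!
Write `U_j = B_{n,j+1,j}`. Counting the `(j+1)`-sets above `η ∪ μ` and the `(j-1)`-sets below
`η ∩ μ` gives `U_jᵀ U_j = U_{j-1} U_{j-1}ᵀ + (n - 2j) I`, which is positive definite when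
`2j < n`, so `U_j` is injective. Since `U_j B_{n,j,l} = (j+1-l) B_{n,j+1,l}`, injectivity climbs
from `B_{n,l,l} = I` to every `B_{n,k,l}` with `2k ≤ n`, and an injective matrix has rank equal
to its number of columns, `C(n,l)`.
-/

open Finset

open Matrix

section Counting

variable {α : Type*}

theorem sum_boole_eq_card_filter_powersetCard [Fintype α] (m : ℕ) (P : Finset α → Prop)
    [DecidablePred P] :
    ∑ s : {s : Finset α // #s = m}, (if P s then (1 : ℝ) else 0) =
      #{s ∈ powersetCard m univ | P s} := by
  rw [← sum_subtype _ (fun _ ↦ mem_powersetCard_univ) (fun s ↦ if P s then (1 : ℝ) else 0),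
    sum_boole]

variable [DecidableEq α]

theorem card_filter_superset_powersetCard {a s : Finset α} (has : a ⊆ s) {m : ℕ}
    (ham : #a ≤ m) : #{t ∈ s.powersetCard m | a ⊆ t} = (#s - #a).choose (m - #a) := by
  rw [← card_sdiff_of_subset has, ← card_powersetCard]
  refine card_nbij' (· \ a) (· ∪ a) ?_ ?_ ?_ ?_
  · intro t ht
    simp only [mem_coe, mem_filter, mem_powersetCard] at ht ⊢
    exact ⟨sdiff_subset_sdiff ht.1.1 le_rfl, by rw [card_sdiff_of_subset ht.2, ht.1.2]⟩
  · intro u hu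
    simp only [mem_coe, mem_filter, mem_powersetCard, subset_sdiff] at hu ⊢
    refine ⟨⟨union_subset hu.1.1 has, ?_⟩, subset_union_right⟩
    rw [card_union_of_disjoint hu.1.2, hu.2]
    omega
  · intro t ht
    simp only [mem_coe, mem_filter] at ht
    exact sdiff_union_of_subset ht.2
  · intro u hu
    simp only [mem_coe, mem_powersetCard, subset_sdiff] at hu
    exact union_sdiff_cancel_right hu.1.2

theorem filter_powersetCard_univ_subset [Fintype α] (m : ℕ) (s : Finset α) :
    {t ∈ powersetCard m (univ : Finset α) | t ⊆ s} = s.powersetCard m := by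
  ext t
  simp [and_comm]

end Counting

theorem inclMatrix_self (n l : ℕ) : inclMatrix n l l = 1 := by
  ext σ η
  by_cases h : σ = η
  · simp [inclMatrix, h, one_apply]
  · have : ¬η.1 ⊆ σ.1 := fun hs ↦
      h (Subtype.ext (eq_of_subset_of_card_le hs (by rw [σ.2, η.2])).symm)
    simp [inclMatrix, h, this, one_apply]

theorem inclMatrix_mul_inclMatrix_apply (n k j l : ℕ) (σ : {s : Finset (Fin n) // #s = k})
    (η : {s : Finset (Fin n) // #s = l}) :
    (inclMatrix n k j * inclMatrix n j l) σ η = #{τ ∈ σ.1.powersetCard j | η.1 ⊆ τ} := by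
  simp only [mul_apply, inclMatrix, ite_zero_mul_ite_zero, mul_one]
  rw [sum_boole_eq_card_filter_powersetCard j (fun τ ↦ τ ⊆ σ.1 ∧ η.1 ⊆ τ),
    ← filter_filter, filter_powersetCard_univ_subset]

theorem inclMatrix_mul_inclMatrix {n k j l : ℕ} (hlj : l ≤ j) :
    inclMatrix n k j * inclMatrix n j l = ((k - l).choose (j - l) : ℝ) • inclMatrix n k l := by
  ext σ η
  rw [inclMatrix_mul_inclMatrix_apply, Matrix.smul_apply, inclMatrix, smul_eq_mul]
  split_ifs with h
  · rw [card_filter_superset_powersetCard h (η.2.trans_le hlj), σ.2, η.2, mul_one]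
  · rw [filter_eq_empty_iff.2 fun τ hτ hητ ↦ h (hητ.trans (mem_powersetCard.1 hτ).1)]
    simp

theorem inclMatrix_transpose_mul_self_apply (n k l : ℕ)
    (η μ : {s : Finset (Fin n) // #s = l}) :
    ((inclMatrix n k l)ᵀ * inclMatrix n k l) η μ =
      #{σ ∈ powersetCard k univ | η.1 ∪ μ.1 ⊆ σ} := by
  simp only [mul_apply, transpose_apply, inclMatrix, ite_zero_mul_ite_zero, mul_one,
    ← union_subset_iff]
  exact sum_boole_eq_card_filter_powersetCard k _

theorem inclMatrix_mul_transpose_self_apply (n k l : ℕ) (σ ρ : {s : Finset (Fin n) // #s = k}) :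
    (inclMatrix n k l * (inclMatrix n k l)ᵀ) σ ρ = (#(σ.1 ∩ ρ.1)).choose l := by
  simp only [mul_apply, transpose_apply, inclMatrix, ite_zero_mul_ite_zero, mul_one,
    ← subset_inter_iff]
  rw [sum_boole_eq_card_filter_powersetCard l (· ⊆ σ.1 ∩ ρ.1),
    filter_powersetCard_univ_subset, card_powersetCard]

theorem inclMatrix_transpose_mul_self_succ (n l : ℕ) :
    (inclMatrix n (l + 2) (l + 1))ᵀ * inclMatrix n (l + 2) (l + 1) =
      inclMatrix n (l + 1) l * (inclMatrix n (l + 1) l)ᵀ + ((n : ℝ) - 2 * (l + 1)) • 1 := by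
  ext η μ
  rw [inclMatrix_transpose_mul_self_apply, Matrix.add_apply, inclMatrix_mul_transpose_self_apply,
    Matrix.smul_apply, one_apply, smul_eq_mul]
  have hcard : #(η.1 ∩ μ.1) + #(η.1 ∪ μ.1) = 2 * (l + 1) := by
    rw [card_inter_add_card_union, η.2, μ.2, two_mul]
  have hn : #(η.1 ∪ μ.1) ≤ n := by simpa using card_le_univ (η.1 ∪ μ.1)
  by_cases h : η = μ
  · subst h
    simp only [union_self, inter_self, η.2, if_pos] at hn ⊢
    rw [card_filter_superset_powersetCard (subset_univ _) (by omega), card_univ,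
      Fintype.card_fin, η.2, show l + 2 - (l + 1) = 1 by omega, Nat.choose_one_right,
      Nat.choose_succ_self_right]
    push_cast [Nat.cast_sub hn]
    ring
  rw [if_neg h, mul_zero, add_zero]
  have hinter : #(η.1 ∩ μ.1) ≤ l := by
    by_contra! hl
    have hη := eq_of_subset_of_card_le (inter_subset_left : η.1 ∩ μ.1 ⊆ η.1)
      (by rw [η.2]; omega)
    have hμ := eq_of_subset_of_card_le (inter_subset_right : η.1 ∩ μ.1 ⊆ μ.1)
      (by rw [μ.2]; omega)
    exact h (Subtype.ext (hη.symm.trans hμ))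
  rcases hinter.eq_or_lt with hl | hl
  · rw [card_filter_superset_powersetCard (subset_univ _) (by omega), hl, Nat.choose_self,
      show l + 2 - #(η.1 ∪ μ.1) = 0 by omega, Nat.choose_zero_right]
  · rw [Nat.choose_eq_zero_of_lt hl, filter_eq_empty_iff.2 fun σ hσ hsub ↦ by
      have := card_le_card hsub
      rw [mem_powersetCard_univ.1 hσ] at this
      omega]
    simp

theorem inclMatrix_one_zero_transpose_mul_self (n : ℕ) :
    (inclMatrix n 1 0)ᵀ * inclMatrix n 1 0 = (n : ℝ) • 1 := by
  ext η μ
  obtain rfl : η = μ := Subtype.ext ((card_eq_zero.1 η.2).trans (card_eq_zero.1 μ.2).symm)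
  rw [inclMatrix_transpose_mul_self_apply, card_eq_zero.1 η.2, union_empty,
    card_filter_superset_powersetCard (subset_univ ∅) (Nat.zero_le 1)]
  simp

theorem Matrix.mulVec_injective_of_transpose_mul_self_eq {m p : Type*} [Fintype m] [Fintype p]
    [DecidableEq p] (A : Matrix m p ℝ) {P : Matrix p p ℝ} (hP : P.PosSemidef) {c : ℝ}
    (hc : 0 < c) (h : Aᵀ * A = P + c • 1) : Function.Injective A.mulVec := by
  have hpos : (Aᵀ * A).PosDef := h ▸ PosDef.posSemidef_add hP (PosDef.one.smul hc)
  refine Function.Injective.of_comp (f := Aᵀ.mulVec) ?_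
  simpa only [Function.comp_def, mulVec_mulVec] using mulVec_injective_of_isUnit hpos.isUnit

theorem inclMatrix_succ_mulVec_injective {n l : ℕ} (hl : 2 * l < n) :
    Function.Injective (inclMatrix n (l + 1) l).mulVec := by
  cases l with
  | zero =>
    exact mulVec_injective_of_transpose_mul_self_eq _ PosSemidef.zero (c := n)
      (by exact_mod_cast hl) ((inclMatrix_one_zero_transpose_mul_self n).trans (zero_add _).symm)
  | succ l =>
    refine mulVec_injective_of_transpose_mul_self_eq _ ?_ ?_
      (inclMatrix_transpose_mul_self_succ n l)
    · simpa only [conjTranspose_eq_transpose_of_trivial] using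
        posSemidef_self_mul_conjTranspose (inclMatrix n (l + 1) l)
    · have : (2 * (l + 1) : ℝ) < n := by exact_mod_cast hl
      linarith

theorem inclMatrix_mulVec_injective {n k l : ℕ} (hlk : l ≤ k) (hk : 2 * k ≤ n) :
    Function.Injective (inclMatrix n k l).mulVec := by
  induction k, hlk using Nat.le_induction with
  | base =>
    rw [inclMatrix_self]
    exact fun x y h ↦ by simpa only [one_mulVec] using h
  | succ k hlk ih =>
    have hcomp := (inclMatrix_succ_mulVec_injective (l := k) (by omega)).comp (ih (by omega))
    rw [Function.comp_def] at hcomp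
    simp_rw [mulVec_mulVec, inclMatrix_mul_inclMatrix hlk, smul_mulVec] at hcomp
    exact hcomp.of_comp (f := (_ • ·))

/-- For `0 ≤ l ≤ k ≤ ⌊n/2⌋`, the inclusion matrix `B_{n,k,l}` has full column rank `C(n,l)`. -/
theorem inclMatrix_rank (n k l : ℕ) (hlk : l ≤ k) (hk : k ≤ n / 2) :
    (inclMatrix n k l).rank = Nat.choose n l := by
  rw [Matrix.rank, LinearMap.finrank_range_of_inj (inclMatrix_mulVec_injective hlk (by omega)),
    Module.finrank_fintype_fun_eq_card, Fintype.card_finset_len, Fintype.card_fin]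
end

section
/- Let G be a graph on [n] and 1 ≤ k ≤ ⌊n/2⌋. Then the multiset of eigenvalues of L_{k−1}(G) is contained (with multiplicities) in the multiset of eigenvalues of L_k(G), where L_j(G) is the Laplacian of the j-th token graph F_j(G). -/
/-!
Let `W` be the inclusion matrix between `k`-subsets and `(k-1)`-subsets of `[n]`. Each edge `uv`
of `G` acts on `j`-subsets by the transposition `(u v)`, and `L_j(G) = ∑_{uv ∈ E} (I - P_uv)`
where `P_uv` is the corresponding permutation matrix. Inclusion commutes with permutations, so
`L_k W = W L_{k-1}`. For `2(k-1) < n` Gottlieb's identity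
`WᵀW = W'W'ᵀ + (n - 2(k-1)) I` (with `W'` the next inclusion matrix down) makes `WᵀW` positive
definite, so `W` is injective and embeds each eigenspace of `L_{k-1}` into the eigenspace of `L_k`
for the same eigenvalue. For symmetric matrices these dimensions are the multiplicities.
-/

open Finset

/-- The multiset of eigenvalues (with multiplicities) of the Laplacian of the `k`-th token
graph of `G`. -/
noncomputable def evMultiset (n k : ℕ) (G : SimpleGraph (Fin n)) : Multiset ℝ :=
  (Finset.univ.val.map
    (SimpleGraph.posSemidef_lapMatrix ℝ (tokenGraph n k G)).isHermitian.eigenvalues)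

open Matrix Module

namespace Finset

variable {α : Type*} [DecidableEq α] {s : Finset α} {u v u' v' : α}

theorem map_swap_of_mem_of_notMem (hu : u ∈ s) (hv : v ∉ s) :
    s.map (Equiv.swap u v).toEmbedding = insert v (s.erase u) := by
  ext x
  rw [mem_map_equiv, Equiv.symm_swap, Equiv.swap_apply_def]
  grind

theorem map_swap_eq_self (h : u ∈ s ↔ v ∈ s) :
    s.map (Equiv.swap u v).toEmbedding = s := by
  ext x
  rw [mem_map_equiv, Equiv.symm_swap, Equiv.swap_apply_def]
  grind

theorem eq_and_eq_of_insert_erase_eq (hu : u ∈ s) (hv : v ∉ s) (hv' : v' ∉ s)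
    (h : insert v (s.erase u) = insert v' (s.erase u')) : u = u' ∧ v = v' := by
  have hv_mem := h ▸ mem_insert_self v (s.erase u)
  have hu_mem : u ∉ insert v' (s.erase u') := h ▸ by grind
  grind

end Finset

def Equiv.Perm.onCardSubsets {α : Type*} [DecidableEq α] (σ : Equiv.Perm α) (k : ℕ) :
    Equiv.Perm {s : Finset α // s.card = k} :=
  σ.finsetCongr.subtypeEquiv fun s => by simp

@[simp]
theorem Equiv.Perm.coe_onCardSubsets_apply {α : Type*} [DecidableEq α] (σ : Equiv.Perm α)
    (k : ℕ) (S : {s : Finset α // s.card = k}) :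
    (σ.onCardSubsets k S).1 = S.1.map σ.toEmbedding :=
  rfl

def Sym2.swap {α : Type*} [DecidableEq α] : Sym2 α → Equiv.Perm α :=
  Sym2.lift ⟨Equiv.swap, Equiv.swap_comm⟩

@[simp]
theorem Sym2.swap_mk {α : Type*} [DecidableEq α] (u v : α) :
    Sym2.swap s(u, v) = Equiv.swap u v :=
  rfl

section TokenGraph

variable {n k : ℕ} {G : SimpleGraph (Fin n)}

theorem tokenGraph_adj_iff_s7 {S T : {s : Finset (Fin n) // s.card = k}} :
    (tokenGraph n k G).Adj S T ↔
      ∃ u v, G.Adj u v ∧ u ∈ S.1 ∧ v ∉ S.1 ∧ T.1 = insert v (S.1.erase u) := by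
  obtain ⟨S, hS⟩ := S
  obtain ⟨T, hT⟩ := T
  simp only [tokenGraph, SimpleGraph.fromRel_adj, ne_eq, Subtype.mk.injEq, inter_comm T,
    symmDiff_comm T, or_self]
  constructor
  · rintro ⟨hne, hcard, u, v, huv, hsymm⟩
    have hk : k ≠ 0 := by
      rintro rfl
      exact hne ((card_eq_zero.1 hS).trans (card_eq_zero.1 hT).symm)
    obtain ⟨a, ha⟩ := card_eq_one.1 (by grind [card_sdiff_add_card_inter S T] : #(S \ T) = 1)
    obtain ⟨b, hb⟩ := card_eq_one.1 (by grind [card_sdiff_add_card_inter T S] : #(T \ S) = 1)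
    have hmem : ∀ x, (x ∈ S ∧ x ∉ T ↔ x = a) ∧ (x ∈ T ∧ x ∉ S ↔ x = b) := fun x => by
      simp only [← mem_sdiff, ha, hb, mem_singleton, and_self]
    have hab : ({u, v} : Finset (Fin n)) = {a, b} := by
      rw [← hsymm, symmDiff_def, ha, hb]
      rfl
    have hadj : G.Adj a b := by
      have ha' : a ∈ ({u, v} : Finset _) := hab ▸ mem_insert_self a {b}
      have hb' : b ∈ ({u, v} : Finset _) := hab ▸ by simp
      have hab' : a ≠ b := by grind
      simp only [mem_insert, mem_singleton] at ha' hb'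
      grind [SimpleGraph.adj_comm]
    refine ⟨a, b, hadj, ((hmem a).1.2 rfl).1, ((hmem b).2.2 rfl).2, ?_⟩
    ext x
    grind
  · rintro ⟨u, v, huv, hu, hv, rfl⟩
    refine ⟨fun h => hv (h ▸ mem_insert_self v _), ?_, u, v, huv, ?_⟩
    · rw [← hS, ← card_erase_of_mem hu]
      congr 1
      ext x
      grind
    · ext x
      simp only [mem_symmDiff]
      grind

theorem exists_eq_mk_of_onCardSubsets_swap_ne {S : {s : Finset (Fin n) // s.card = k}}
    {e : Sym2 (Fin n)} (he : e ∈ G.edgeSet) (hS : e.swap.onCardSubsets k S ≠ S) :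
    ∃ u v, G.Adj u v ∧ u ∈ S.1 ∧ v ∉ S.1 ∧ e = s(u, v) := by
  induction e using Sym2.ind with
  | h u v =>
    have huv : ¬(u ∈ S.1 ↔ v ∈ S.1) := fun h => hS (Subtype.ext (map_swap_eq_self h))
    by_cases hu : u ∈ S.1
    · exact ⟨u, v, he, hu, by tauto, rfl⟩
    · exact ⟨v, u, G.adj_symm he, by tauto, hu, Sym2.eq_swap⟩

theorem lapMatrix_tokenGraph_mulVec [DecidableRel G.Adj]
    (x : {s : Finset (Fin n) // s.card = k} → ℝ) :
    (tokenGraph n k G).lapMatrix ℝ *ᵥ x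
      = ∑ e ∈ G.edgeFinset, (x - x ∘ e.swap.onCardSubsets k) := by
  ext S
  rw [SimpleGraph.lapMatrix_mulVec_apply, ← SimpleGraph.card_neighborFinset_eq_degree,
    ← nsmul_eq_mul, ← sum_const, ← sum_sub_distrib, Finset.sum_apply]
  simp only [Pi.sub_apply, Function.comp_apply]
  symm
  rw [← sum_filter_of_ne (s := G.edgeFinset) (p := fun e => e.swap.onCardSubsets k S ≠ S)
    fun e _ h hS => h (by rw [hS, sub_self])]
  refine sum_nbij (fun e => e.swap.onCardSubsets k S) ?_ ?_ ?_ fun _ _ => rfl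
  · intro e he
    simp only [mem_filter, SimpleGraph.mem_edgeFinset] at he
    obtain ⟨u, v, huv, hu, hv, rfl⟩ := exists_eq_mk_of_onCardSubsets_swap_ne he.1 he.2
    rw [SimpleGraph.mem_neighborFinset]
    exact tokenGraph_adj_iff_s7.2 ⟨u, v, huv, hu, hv, map_swap_of_mem_of_notMem hu hv⟩
  · intro e he f hf hef
    simp only [mem_coe, mem_filter, SimpleGraph.mem_edgeFinset] at he hf
    obtain ⟨u, v, -, hu, hv, rfl⟩ := exists_eq_mk_of_onCardSubsets_swap_ne he.1 he.2
    obtain ⟨u', v', -, hu', hv', rfl⟩ := exists_eq_mk_of_onCardSubsets_swap_ne hf.1 hf.2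
    have hsets := congrArg Subtype.val hef
    simp only [Equiv.Perm.coe_onCardSubsets_apply, Sym2.swap_mk] at hsets
    rw [map_swap_of_mem_of_notMem hu hv, map_swap_of_mem_of_notMem hu' hv'] at hsets
    obtain ⟨rfl, rfl⟩ := eq_and_eq_of_insert_erase_eq hu hv hv' hsets
    rfl
  · intro T hT
    obtain ⟨u, v, huv, hu, hv, hT⟩ :=
      tokenGraph_adj_iff_s7.1 ((SimpleGraph.mem_neighborFinset _ _ _).1 hT)
    have hmove : s(u, v).swap.onCardSubsets k S = T := Subtype.ext <| by
      rw [Equiv.Perm.coe_onCardSubsets_apply, Sym2.swap_mk, map_swap_of_mem_of_notMem hu hv, hT]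
    refine ⟨s(u, v), ?_, hmove⟩
    simp only [mem_coe, mem_filter, SimpleGraph.mem_edgeFinset, SimpleGraph.mem_edgeSet, hmove]
    exact ⟨huv, fun h => hv (h ▸ hT ▸ mem_insert_self v _)⟩

end TokenGraph

def inclusionMatrix (α : Type*) [DecidableEq α] (a b : ℕ) :
    Matrix {s : Finset α // s.card = a} {s : Finset α // s.card = b} ℝ :=
  of fun S A => if A.1 ⊆ S.1 then 1 else 0

section InclusionMatrix

variable {α : Type*} [Fintype α] {a b : ℕ}

theorem card_filter_cardSubsets (P : Finset α → Prop) [DecidablePred P] :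
    #{S : {s : Finset α // s.card = a} | P S.1} = #{s ∈ powersetCard a univ | P s} := by
  refine card_bij (fun S _ => S.1) (fun S hS => ?_) (fun _ _ _ _ => Subtype.ext) fun s hs => ?_
  · simp_all [mem_powersetCard, S.2]
  · simp only [mem_filter, mem_powersetCard] at hs
    exact ⟨⟨s, hs.1.2⟩, by simpa using hs.2, rfl⟩

variable [DecidableEq α]

theorem card_supersets_cardSubsets {c : Finset α} {j : ℕ} (hc : #c + j = a) :
    #{S : {s : Finset α // s.card = a} | c ⊆ S.1} = (Fintype.card α - #c).choose j := by
  rw [card_filter_cardSubsets, card_filter_powersetCard_subset _ _ _ (subset_univ c)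
    (by omega), card_univ]
  congr 1
  omega

theorem card_supersets_cardSubsets_eq_zero {c : Finset α} (hc : a < #c) :
    #{S : {s : Finset α // s.card = a} | c ⊆ S.1} = 0 :=
  card_eq_zero.2 <| filter_eq_empty_iff.2 fun S _ hS => by
    have := card_le_card hS
    omega

theorem card_subsets_cardSubsets (d : Finset α) :
    #{C : {s : Finset α // s.card = b} | C.1 ⊆ d} = (#d).choose b := by
  rw [card_filter_cardSubsets (· ⊆ d), ← card_powersetCard]
  congr 1
  ext s
  simp [mem_powersetCard, and_comm]

theorem inclusionMatrix_mulVec_comp_onCardSubsets (σ : Equiv.Perm α)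
    (x : {s : Finset α // s.card = b} → ℝ) :
    inclusionMatrix α a b *ᵥ (x ∘ σ.onCardSubsets b)
      = (inclusionMatrix α a b *ᵥ x) ∘ σ.onCardSubsets a := by
  ext S
  simp only [Function.comp_apply, mulVec, dotProduct, inclusionMatrix, of_apply]
  refine Fintype.sum_equiv (σ.onCardSubsets b) _ _ fun A => ?_
  simp only [Equiv.Perm.coe_onCardSubsets_apply, map_subset_map]

theorem transpose_mul_inclusionMatrix_apply (A B : {s : Finset α // s.card = b}) :
    ((inclusionMatrix α a b)ᵀ * inclusionMatrix α a b) A B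
      = #{S : {s : Finset α // s.card = a} | A.1 ∪ B.1 ⊆ S.1} := by
  rw [mul_apply, natCast_card_filter]
  refine sum_congr rfl fun S _ => ?_
  simp only [transpose_apply, inclusionMatrix, of_apply, union_subset_iff]
  split_ifs <;> simp_all

theorem inclusionMatrix_mul_transpose_apply (A B : {s : Finset α // s.card = a}) :
    (inclusionMatrix α a b * (inclusionMatrix α a b)ᵀ) A B
      = #{C : {s : Finset α // s.card = b} | C.1 ⊆ A.1 ∩ B.1} := by
  rw [mul_apply, natCast_card_filter]
  refine sum_congr rfl fun S _ => ?_
  simp only [transpose_apply, inclusionMatrix, of_apply, subset_inter_iff]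
  split_ifs <;> simp_all

theorem transpose_mul_inclusionMatrix_succ (b : ℕ) :
    (inclusionMatrix α (b + 2) (b + 1))ᵀ * inclusionMatrix α (b + 2) (b + 1)
      = inclusionMatrix α (b + 1) b * (inclusionMatrix α (b + 1) b)ᵀ
        + ((Fintype.card α : ℝ) - 2 * (b + 1)) • 1 := by
  ext A B
  rw [Matrix.add_apply, transpose_mul_inclusionMatrix_apply, inclusionMatrix_mul_transpose_apply,
    card_subsets_cardSubsets, Matrix.smul_apply, one_apply]
  have hA := A.2
  have hB := B.2
  have hunion := card_union_add_card_inter A.1 B.1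
  by_cases hAB : A = B
  · subst hAB
    have hn := card_le_univ A.1
    rw [union_self, inter_self, card_supersets_cardSubsets (j := 1) (by omega), if_pos rfl,
      hA, Nat.choose_one_right, Nat.choose_succ_self_right, smul_eq_mul, mul_one,
      Nat.cast_sub (by omega)]
    push_cast
    ring
  · have hAB' : A.1 ≠ B.1 := fun h => hAB (Subtype.ext h)
    have hinter : #(A.1 ∩ B.1) < b + 1 := by
      have hssub : A.1 ∩ B.1 ⊂ A.1 := inter_subset_left.ssubset_of_ne fun h =>
        hAB' (eq_of_subset_of_card_le (inter_eq_left.1 h) (by omega))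
      exact (card_lt_card hssub).trans_eq hA
    rw [if_neg hAB, smul_zero, add_zero]
    rcases (Nat.lt_succ_iff.1 hinter).eq_or_lt with h | h
    · rw [card_supersets_cardSubsets (j := 0) (by omega), h, Nat.choose_zero_right,
        Nat.choose_self]
    · rw [card_supersets_cardSubsets_eq_zero (by omega), Nat.choose_eq_zero_of_lt h]

theorem posDef_transpose_mul_inclusionMatrix (hb : 2 * b < Fintype.card α) :
    ((inclusionMatrix α (b + 1) b)ᵀ * inclusionMatrix α (b + 1) b).PosDef := by
  have hpos : (0 : ℝ) < Fintype.card α - 2 * b := by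
    rw [sub_pos]
    exact_mod_cast hb
  cases b with
  | zero =>
    have hscalar :
        (inclusionMatrix α 1 0)ᵀ * inclusionMatrix α 1 0 = (Fintype.card α : ℝ) • 1 := by
      ext A B
      obtain rfl : A = B := Subtype.ext ((card_eq_zero.1 A.2).trans (card_eq_zero.1 B.2).symm)
      rw [transpose_mul_inclusionMatrix_apply,
        card_supersets_cardSubsets (j := 1) (by simp [A.2])]
      simp [A.2]
    rw [hscalar]
    exact PosDef.one.smul (by simpa using hpos)
  | succ b =>
    have hpsd := posSemidef_self_mul_conjTranspose (inclusionMatrix α (b + 1) b)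
    rw [conjTranspose_eq_transpose_of_trivial] at hpsd
    rw [transpose_mul_inclusionMatrix_succ]
    exact PosDef.posSemidef_add hpsd (PosDef.one.smul (by simpa using hpos))

theorem inclusionMatrix_mulVec_injective (hb : 2 * b < Fintype.card α) :
    Function.Injective (inclusionMatrix α (b + 1) b).mulVec := by
  have h := mulVec_injective_iff_isUnit.2 (posDef_transpose_mul_inclusionMatrix hb).isUnit
  exact fun x y hxy => h (by simp only [← mulVec_mulVec, hxy])

end InclusionMatrix

theorem lapMatrix_tokenGraph_mul_inclusionMatrix {n : ℕ} (G : SimpleGraph (Fin n)) (a b : ℕ) :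
    (tokenGraph n a G).lapMatrix ℝ * inclusionMatrix (Fin n) a b
      = inclusionMatrix (Fin n) a b * (tokenGraph n b G).lapMatrix ℝ := by
  classical
  refine ext_iff_mulVec.2 fun x => ?_
  rw [← mulVec_mulVec, ← mulVec_mulVec, lapMatrix_tokenGraph_mulVec,
    lapMatrix_tokenGraph_mulVec, mulVec_sum]
  refine sum_congr rfl fun e _ => ?_
  rw [mulVec_sub, inclusionMatrix_mulVec_comp_onCardSubsets]

open End in
theorem Module.End.finrank_eigenspace_le_of_comp_eq {K V W : Type*} [Field K] [AddCommGroup V]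
    [Module K V] [AddCommGroup W] [Module K W] [FiniteDimensional K W] {f : V →ₗ[K] W}
    (hf : Function.Injective f) {T : End K V} {S : End K W} (h : f ∘ₗ T = S ∘ₗ f) (μ : K) :
    finrank K (eigenspace T μ) ≤ finrank K (eigenspace S μ) := by
  have hmap : (eigenspace T μ).map f ≤ eigenspace S μ := by
    rintro _ ⟨x, hx, rfl⟩
    rw [SetLike.mem_coe, mem_eigenspace_iff] at hx
    rw [mem_eigenspace_iff, ← LinearMap.comp_apply, ← h, LinearMap.comp_apply, hx, map_smul]
  calc finrank K (eigenspace T μ)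
      = finrank K ((eigenspace T μ).map f) := (Submodule.equivMapOfInjective f hf _).finrank_eq
    _ ≤ finrank K (eigenspace S μ) := Submodule.finrank_mono hmap

theorem Matrix.IsHermitian.count_eigenvalues {𝕜 ι : Type*} [RCLike 𝕜] [Fintype ι]
    [DecidableEq ι] {A : Matrix ι ι 𝕜} (hA : A.IsHermitian) (μ : ℝ) :
    (univ.val.map hA.eigenvalues).count μ = finrank 𝕜 (End.eigenspace (toEuclideanLin A) μ) := by
  rw [Multiset.count_map, ← (isSymmetric_toEuclideanLin_iff.2 hA).card_filter_eigenvalues_eq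
    finrank_euclideanSpace, ← filter_val, card_val]
  refine card_equiv (Fintype.equivOfCardEq (Fintype.card_fin _)).symm fun i => ?_
  simp only [Finset.mem_filter, mem_univ, true_and]
  simp [IsHermitian.eigenvalues, IsHermitian.eigenvalues₀, eq_comm]

theorem Matrix.IsHermitian.count_eigenvalues_le_of_mul_eq {𝕜 ι κ : Type*} [RCLike 𝕜]
    [Fintype ι] [DecidableEq ι] [Fintype κ] [DecidableEq κ] {A : Matrix ι ι 𝕜}
    {B : Matrix κ κ 𝕜} (hA : A.IsHermitian) (hB : B.IsHermitian) {W : Matrix κ ι 𝕜}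
    (hW : Function.Injective W.mulVec) (h : B * W = W * A) (μ : ℝ) :
    (univ.val.map hA.eigenvalues).count μ ≤ (univ.val.map hB.eigenvalues).count μ := by
  rw [hA.count_eigenvalues, hB.count_eigenvalues]
  refine End.finrank_eigenspace_le_of_comp_eq (f := toEuclideanLin W) ?_ ?_ _
  · intro x y hxy
    exact WithLp.ofLp_injective 2 (hW (by simpa using congrArg WithLp.ofLp hxy))
  · rw [← toLpLin_mul_same, ← toLpLin_mul_same, h]

/-- For `1 ≤ k ≤ ⌊n/2⌋`, the multiset of eigenvalues of `L_{k-1}(G)` is contained, with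
multiplicities, in the multiset of eigenvalues of `L_k(G)`. -/
theorem evMultiset_le (n k : ℕ) (G : SimpleGraph (Fin n)) (hk : 1 ≤ k) (hkn : k ≤ n / 2) :
    evMultiset n (k - 1) G ≤ evMultiset n k G := by
  obtain ⟨b, rfl⟩ : ∃ b, k = b + 1 := ⟨k - 1, by omega⟩
  have hb : 2 * b < Fintype.card (Fin n) := by
    rw [Fintype.card_fin]
    omega
  rw [evMultiset, evMultiset, Nat.add_sub_cancel, Multiset.le_iff_count]
  exact IsHermitian.count_eigenvalues_le_of_mul_eq _ _ (inclusionMatrix_mulVec_injective hb)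
    (lapMatrix_tokenGraph_mul_inclusionMatrix G (b + 1) b)
end

section
/- Let G be a graph on [n], 2 ≤ k ≤ ⌊n/2⌋, and let φ ∈ ℝ^{C(n,k)} satisfy B_{n,k,k−1}ᵀ φ = 0. Then for every u ∈ [n], the vector φ_u ∈ ℝ^{C(n,k−1)} defined by φ_u(τ) = φ(τ ∪ {u}) if u ∉ τ and 0 otherwise, satisfies B_{n,k−1,k−2}ᵀ φ_u = 0. -/
/-!
The `ρ`-entry of `B_{n,k-1,k-2}ᵀ φ_u` is the sum of `φ_u` over the `(k-1)`-supersets `τ` of `ρ`.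
If `u ∈ ρ` every term vanishes. Otherwise the nonzero terms are those with `u ∉ τ`, and
`τ ↦ τ ∪ {u}` matches them with the `k`-supersets of `ρ ∪ {u}`, so the sum is the
`(ρ ∪ {u})`-entry of `B_{n,k,k-1}ᵀ φ = 0`.
-/

open Finset Matrix

/-- For `φ` on `k`-subsets of `[n]` and `u ∈ [n]`, the vector `φ_u` on `(k-1)`-subsets:
`φ_u(τ) = φ(τ ∪ {u})` if `u ∉ τ`, and `0` if `u ∈ τ`. -/
def phiU (n k : ℕ) (hk : 1 ≤ k) (φ : {s : Finset (Fin n) // s.card = k} → ℝ) (u : Fin n)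
    (τ : {s : Finset (Fin n) // s.card = k - 1}) : ℝ :=
  if h : u ∈ τ.1 then 0
  else φ ⟨insert u τ.1, by rw [Finset.card_insert_of_notMem h, τ.2]; omega⟩

section
variable {n k : ℕ}

theorem inclMatrix_transpose_mulVec_apply (l : ℕ) (ψ : {s : Finset (Fin n) // s.card = k} → ℝ)
    (η : {s : Finset (Fin n) // s.card = l}) :
    ((inclMatrix n k l)ᵀ *ᵥ ψ) η = ∑ σ with η.1 ⊆ σ.1, ψ σ := by
  simp [mulVec, dotProduct, inclMatrix, sum_filter]

theorem sum_phiU_of_mem (hk : 1 ≤ k) (φ : {s : Finset (Fin n) // s.card = k} → ℝ)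
    {u : Fin n} {ρ : Finset (Fin n)} (hu : u ∈ ρ) :
    ∑ τ : {s : Finset (Fin n) // s.card = k - 1} with ρ ⊆ τ.1, phiU n k hk φ u τ = 0 :=
  sum_eq_zero fun _ hτ => dif_pos ((mem_filter.mp hτ).2 hu)

theorem sum_phiU_of_notMem (hk : 1 ≤ k) (φ : {s : Finset (Fin n) // s.card = k} → ℝ)
    {u : Fin n} {ρ : Finset (Fin n)} (hu : u ∉ ρ) :
    ∑ τ : {s : Finset (Fin n) // s.card = k - 1} with ρ ⊆ τ.1, phiU n k hk φ u τ =
      ∑ σ : {s : Finset (Fin n) // s.card = k} with insert u ρ ⊆ σ.1, φ σ := by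
  rw [← sum_filter_of_ne (p := fun τ => u ∉ τ.1) (f := phiU n k hk φ u)
    fun _ _ hne hmem => hne (dif_pos hmem), filter_filter]
  refine sum_bij' (fun τ hτ => ⟨insert u τ.1, by
      rw [card_insert_of_notMem (mem_filter.mp hτ).2.2, τ.2]; omega⟩)
    (fun σ hσ => ⟨σ.1.erase u, by
      rw [card_erase_of_mem ((mem_filter.mp hσ).2 (mem_insert_self u ρ)), σ.2]⟩)
    ?_ ?_ ?_ ?_ ?_
  · intro τ hτ
    simpa using insert_subset_insert u (mem_filter.mp hτ).2.1
  · intro σ hσ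
    simpa [subset_erase, hu] using (insert_subset_iff.mp (mem_filter.mp hσ).2).2
  · intro τ hτ
    exact Subtype.ext (erase_insert (mem_filter.mp hτ).2.2)
  · intro σ hσ
    exact Subtype.ext (insert_erase ((mem_filter.mp hσ).2 (mem_insert_self u ρ)))
  · intro τ hτ
    exact dif_neg (mem_filter.mp hτ).2.2

end

/-- If `B_{n,k,k-1}ᵀ φ = 0`, then `B_{n,k-1,k-2}ᵀ φ_u = 0` for every `u ∈ [n]`. -/
theorem phiU_in_ker (n k : ℕ) (hk : 2 ≤ k)
    (φ : {s : Finset (Fin n) // s.card = k} → ℝ)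
    (hφ : (inclMatrix n k (k - 1))ᵀ *ᵥ φ = 0) (u : Fin n) :
    (inclMatrix n (k - 1) (k - 2))ᵀ *ᵥ phiU n k (by omega) φ u = 0 := by
  funext ρ
  rw [inclMatrix_transpose_mulVec_apply, Pi.zero_apply]
  by_cases hu : u ∈ ρ.1
  · exact sum_phiU_of_mem _ φ hu
  · have hcard : (insert u ρ.1).card = k - 1 := by
      rw [card_insert_of_notMem hu, ρ.2]; omega
    rw [sum_phiU_of_notMem _ φ hu,
      ← inclMatrix_transpose_mulVec_apply (k - 1) φ ⟨insert u ρ.1, hcard⟩, hφ, Pi.zero_apply]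
end

section
/- Let G be a graph on n vertices and 2 ≤ k ≤ ⌊n/2⌋. Then the largest eigenvalue of the Laplacian L_k(G) of the k-th token graph is at most (k/(k−1)) times the largest eigenvalue of L_{k−1}(G). -/
/-!
Let `φ` be an eigenvector of `L_k` for its largest eigenvalue. For each `x`, the slice
`ψ_x(T) = φ(T ∪ {x})` (for `x ∉ T`, and `0` otherwise) is a function on `(k-1)`-sets, and
`T ↦ T ∪ {x}` identifies the sets of `F_{k-1}` avoiding `x` with the sets of `F_k` containing
`x`, edges included. An edge `AB` of `F_k` has `|A ∩ B| = k - 1`, so it is seen by exactly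
`k - 1` slices, whence
`(k-1) φᵀL_kφ ≤ ∑ₓ ψₓᵀL_{k-1}ψₓ ≤ λ_max(L_{k-1}) ∑ₓ ‖ψₓ‖² = k λ_max(L_{k-1}) ‖φ‖²`.
-/

open Finset Matrix

/-- The largest eigenvalue of a (symmetric) real matrix. -/
noncomputable def lamMax {V : Type*} [Fintype V] (M : Matrix V V ℝ) : ℝ :=
  sSup {μ : ℝ | ∃ φ : V → ℝ, φ ≠ 0 ∧ M *ᵥ φ = μ • φ}

namespace Matrix

variable {V : Type*} [Fintype V] {M : Matrix V V ℝ}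

lemma lamMax_eq_of_forall_rayleigh_le {μ : ℝ} (hμ : ∃ φ : V → ℝ, φ ≠ 0 ∧ M *ᵥ φ = μ • φ)
    (hle : ∀ f : V → ℝ, f ⬝ᵥ (M *ᵥ f) ≤ μ * (f ⬝ᵥ f)) : lamMax M = μ := by
  refine IsGreatest.csSup_eq ⟨hμ, ?_⟩
  rintro ν ⟨g, hg, hgν⟩
  have hpos : 0 < g ⬝ᵥ g := dotProduct_self_star_pos_iff.mpr hg
  have := hle g
  rw [hgν, dotProduct_smul, smul_eq_mul] at this
  exact le_of_mul_le_mul_right this hpos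

variable [DecidableEq V]

lemma IsHermitian.exists_eigenvalue_forall_rayleigh_le [Nonempty V] (hM : M.IsHermitian) :
    ∃ μ : ℝ, (∃ φ : V → ℝ, φ ≠ 0 ∧ M *ᵥ φ = μ • φ) ∧
      ∀ f : V → ℝ, f ⬝ᵥ (M *ᵥ f) ≤ μ * (f ⬝ᵥ f) := by
  set T := toEuclideanLin M
  have hT : T.IsSymmetric := isSymmetric_toEuclideanLin_iff.mpr hM
  obtain ⟨x, hx⟩ := hT.hasEigenvalue_iSup_of_finiteDimensional.exists_hasEigenvector
  refine ⟨_, ⟨WithLp.ofLp x, by simpa using hx.2, congrArg WithLp.ofLp hx.apply_eq_smul⟩, ?_⟩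
  intro f
  rcases eq_or_ne f 0 with rfl | hf
  · simp
  have hx : WithLp.toLp 2 f ≠ 0 := by simpa using hf
  have hnorm : ‖WithLp.toLp 2 f‖ ^ 2 = f ⬝ᵥ f := by
    rw [← real_inner_self_eq_norm_sq, EuclideanSpace.inner_toLp_toLp, star_trivial]
  have hinner : inner ℝ (T (WithLp.toLp 2 f)) (WithLp.toLp 2 f) = f ⬝ᵥ (M *ᵥ f) := by
    rw [EuclideanSpace.inner_eq_star_dotProduct, star_trivial]; rfl
  have hle := le_ciSup (f := fun x : {x : EuclideanSpace ℝ V // x ≠ 0} =>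
    RCLike.re (inner ℝ (T x) (x : EuclideanSpace ℝ V)) / ‖(x : EuclideanSpace ℝ V)‖ ^ 2)
    ⟨‖LinearMap.toContinuousLinearMap T‖, by
      rintro _ ⟨x, rfl⟩
      exact (le_abs_self _).trans ((LinearMap.toContinuousLinearMap T).rayleighQuotient_le_norm x)⟩
    ⟨_, hx⟩
  have hpos : 0 < f ⬝ᵥ f := by simpa using dotProduct_self_star_pos_iff.mpr hf
  simp only [RCLike.re_to_real, hinner, hnorm] at hle
  rw [div_le_iff₀ hpos] at hle
  simpa using hle

lemma IsHermitian.exists_mulVec_eq_lamMax_smul [Nonempty V] (hM : M.IsHermitian) :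
    ∃ φ : V → ℝ, φ ≠ 0 ∧ M *ᵥ φ = lamMax M • φ := by
  obtain ⟨μ, hμ, hle⟩ := hM.exists_eigenvalue_forall_rayleigh_le
  rwa [lamMax_eq_of_forall_rayleigh_le hμ hle]

lemma IsHermitian.dotProduct_mulVec_le_lamMax_mul (hM : M.IsHermitian) (f : V → ℝ) :
    f ⬝ᵥ (M *ᵥ f) ≤ lamMax M * (f ⬝ᵥ f) := by
  cases isEmpty_or_nonempty V
  · simp [dotProduct]
  obtain ⟨μ, hμ, hle⟩ := hM.exists_eigenvalue_forall_rayleigh_le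
  rw [lamMax_eq_of_forall_rayleigh_le hμ hle]
  exact hle f

end Matrix

lemma SimpleGraph.dotProduct_lapMatrix_mulVec {V : Type*} [Fintype V] [DecidableEq V]
    (H : SimpleGraph V) [DecidableRel H.Adj] (f : V → ℝ) :
    f ⬝ᵥ (H.lapMatrix ℝ *ᵥ f) = (∑ i, ∑ j, if H.Adj i j then (f i - f j) ^ 2 else 0) / 2 := by
  rw [← toLinearMap₂'_apply', lapMatrix_toLinearMap₂']

section

variable {ι : Type*} [Fintype ι] (p : ι → Prop) [DecidablePred p]

lemma Fintype.sum_subtype_eq_sum_ite [Fintype {i // p i}] (f : ι → ℝ) :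
    ∑ i : {i // p i}, f i = ∑ i, if p i then f i else 0 := by
  rw [← Finset.sum_filter]
  exact (Finset.sum_subtype _ (fun i ↦ by simp) f).symm

lemma Fintype.sum_subtype_le_sum [Fintype {i // p i}] {f : ι → ℝ} (hf : ∀ i, 0 ≤ f i) :
    ∑ i : {i // p i}, f i ≤ ∑ i, f i := by
  rw [Fintype.sum_subtype_eq_sum_ite]
  exact Finset.sum_le_sum fun i _ ↦ by split_ifs; exacts [le_rfl, hf i]

lemma Fintype.sum_sum_subtype_eq_sum_sum_ite [Fintype {i // p i}] (g : ι → ι → ℝ) :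
    ∑ i : {i // p i}, ∑ j : {j // p j}, g i j = ∑ i, ∑ j, if p i ∧ p j then g i j else 0 := by
  refine (Fintype.sum_subtype_eq_sum_ite p fun i ↦ ∑ j : {j // p j}, g i j).trans
    (Fintype.sum_congr _ _ fun i ↦ ?_)
  rw [Fintype.sum_subtype_eq_sum_ite p (g i)]
  by_cases hi : p i <;> simp [hi]

end

abbrev KSubset (n k : ℕ) := {s : Finset (Fin n) // s.card = k}

section

variable {n m : ℕ}

def KSubset.insertEquiv (x : Fin n) :
    {T : KSubset n m // x ∉ T.1} ≃ {A : KSubset n (m + 1) // x ∈ A.1} where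
  toFun T := ⟨⟨insert x T.1.1, by rw [card_insert_of_notMem T.2, T.1.2]⟩, mem_insert_self _ _⟩
  invFun A := ⟨⟨A.1.1.erase x, by rw [card_erase_of_mem A.2, A.1.2, add_tsub_cancel_right]⟩,
    notMem_erase _ _⟩
  left_inv T := Subtype.ext <| Subtype.ext <| erase_insert T.2
  right_inv A := Subtype.ext <| Subtype.ext <| insert_erase A.2

lemma tokenGraph_adj_iff_s9 {k : ℕ} (G : SimpleGraph (Fin n)) (A B : KSubset n k) :
    (tokenGraph n k G).Adj A B ↔
      A ≠ B ∧ (A.1 ∩ B.1).card = k - 1 ∧ ∃ u v, G.Adj u v ∧ symmDiff A.1 B.1 = {u, v} := by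
  rw [tokenGraph, SimpleGraph.fromRel_adj, inter_comm B.1, symmDiff_comm B.1, or_self]

lemma Finset.insert_symmDiff_insert_of_notMem {α : Type*} [DecidableEq α] {x : α} {s t : Finset α}
    (hs : x ∉ s) (ht : x ∉ t) : symmDiff (insert x s) (insert x t) = symmDiff s t := by
  ext y
  by_cases hy : y = x
  · subst hy; simp [mem_symmDiff, hs, ht]
  · simp [mem_symmDiff, hy]

lemma tokenGraph_adj_insertEquiv (G : SimpleGraph (Fin n)) (x : Fin n)
    (T T' : {T : KSubset n m // x ∉ T.1}) :
    (tokenGraph n (m + 1) G).Adj (KSubset.insertEquiv x T) (KSubset.insertEquiv x T') ↔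
      (tokenGraph n m G).Adj T T' := by
  obtain ⟨⟨A, hA⟩, hxA⟩ := T
  obtain ⟨⟨B, hB⟩, hxB⟩ := T'
  change x ∉ A at hxA
  change x ∉ B at hxB
  have hinj : insert x A = insert x B ↔ A = B :=
    ⟨fun h ↦ by rw [← erase_insert hxA, h, erase_insert hxB], congrArg _⟩
  have hcard : (insert x A ∩ insert x B).card = (A ∩ B).card + 1 := by
    rw [← insert_inter_distrib, card_insert_of_notMem fun h ↦ hxA (mem_inter.mp h).1]
  rw [tokenGraph_adj_iff_s9, tokenGraph_adj_iff_s9]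
  dsimp only [KSubset.insertEquiv, Equiv.coe_fn_mk]
  simp only [ne_eq, Subtype.mk.injEq, hinj, hcard, Finset.insert_symmDiff_insert_of_notMem hxA hxB,
    add_tsub_cancel_right]
  refine and_congr_right fun hAB ↦ and_congr_left fun _ ↦ ?_
  -- `(A ∩ B).card + 1 = m` and `(A ∩ B).card = m - 1` differ only for `m = 0`, where the
  -- truncated subtraction kicks in; but `KSubset n 0` has a single element.
  have hm : m ≠ 0 := by
    rintro rfl
    exact hAB (by rw [card_eq_zero.mp hA, card_eq_zero.mp hB])
  omega

def tokenSlice (φ : KSubset n (m + 1) → ℝ) (x : Fin n) (T : KSubset n m) : ℝ :=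
  if h : x ∈ T.1 then 0 else φ (KSubset.insertEquiv x ⟨T, h⟩)

lemma tokenSlice_of_mem (φ : KSubset n (m + 1) → ℝ) {x : Fin n} {T : KSubset n m}
    (h : x ∈ T.1) : tokenSlice φ x T = 0 :=
  dif_pos h

lemma tokenSlice_of_notMem (φ : KSubset n (m + 1) → ℝ) {x : Fin n}
    (T : {T : KSubset n m // x ∉ T.1}) : tokenSlice φ x T = φ (KSubset.insertEquiv x T) :=
  dif_neg T.2

lemma dotProduct_tokenSlice_self (φ : KSubset n (m + 1) → ℝ) (x : Fin n) :
    tokenSlice φ x ⬝ᵥ tokenSlice φ x = ∑ A, if x ∈ A.1 then φ A * φ A else 0 := by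
  rw [dotProduct, ← Fintype.sum_subtype_add_sum_subtype (fun T : KSubset n m ↦ x ∉ T.1),
    Fintype.sum_eq_zero (fun T : {T : KSubset n m // ¬x ∉ T.1} ↦
      tokenSlice φ x T * tokenSlice φ x T)
      fun T ↦ by rw [tokenSlice_of_mem φ (not_not.mp T.2), zero_mul],
    add_zero]
  simp_rw [tokenSlice_of_notMem]
  rw [(KSubset.insertEquiv x).sum_comp fun A : {A : KSubset n (m + 1) // x ∈ A.1} ↦ φ A * φ A]
  exact Fintype.sum_subtype_eq_sum_ite (fun A : KSubset n (m + 1) ↦ x ∈ A.1) fun A ↦ φ A * φ A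

lemma sum_dotProduct_tokenSlice_self (φ : KSubset n (m + 1) → ℝ) :
    ∑ x, tokenSlice φ x ⬝ᵥ tokenSlice φ x = (m + 1) * (φ ⬝ᵥ φ) := by
  simp_rw [dotProduct_tokenSlice_self]
  rw [sum_comm, dotProduct, mul_sum]
  refine sum_congr rfl fun A _ ↦ ?_
  rw [Fintype.sum_extend_by_zero, sum_const, A.2, nsmul_eq_mul, Nat.cast_succ]

lemma sum_sum_adj_mem_le_tokenSlice (G : SimpleGraph (Fin n)) (φ : KSubset n (m + 1) → ℝ)
    (x : Fin n) :
    ∑ A : {A : KSubset n (m + 1) // x ∈ A.1}, ∑ B : {B : KSubset n (m + 1) // x ∈ B.1},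
      (if (tokenGraph n (m + 1) G).Adj A B then (φ A - φ B) ^ 2 else 0) ≤
    ∑ T, ∑ T', if (tokenGraph n m G).Adj T T'
      then (tokenSlice φ x T - tokenSlice φ x T') ^ 2 else 0 := by
  have hnonneg : ∀ T T' : KSubset n m, 0 ≤ if (tokenGraph n m G).Adj T T'
      then (tokenSlice φ x T - tokenSlice φ x T') ^ 2 else 0 := fun _ _ ↦ by positivity
  calc _ = ∑ T : {T : KSubset n m // x ∉ T.1}, ∑ T' : {T : KSubset n m // x ∉ T.1},
        if (tokenGraph n m G).Adj T T'
          then (tokenSlice φ x T - tokenSlice φ x T') ^ 2 else 0 := by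
          rw [← (KSubset.insertEquiv x).sum_comp]
          refine Fintype.sum_congr _ _ fun T ↦ ?_
          rw [← (KSubset.insertEquiv x).sum_comp]
          simp only [tokenGraph_adj_insertEquiv, tokenSlice_of_notMem]
    _ ≤ _ := by
      refine (Finset.sum_le_sum fun (T : {T : KSubset n m // x ∉ T.1}) _ ↦
        Fintype.sum_subtype_le_sum (fun T' : KSubset n m ↦ x ∉ T'.1) (hnonneg T)).trans ?_
      exact Fintype.sum_subtype_le_sum _ fun T ↦ Finset.sum_nonneg fun T' _ ↦ hnonneg T T'

lemma mul_sum_sum_adj_eq_sum_sum_adj_mem (G : SimpleGraph (Fin n)) (φ : KSubset n (m + 1) → ℝ) :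
    m * ∑ A, ∑ B, (if (tokenGraph n (m + 1) G).Adj A B then (φ A - φ B) ^ 2 else 0) =
      ∑ x, ∑ A : {A : KSubset n (m + 1) // x ∈ A.1}, ∑ B : {B : KSubset n (m + 1) // x ∈ B.1},
        (if (tokenGraph n (m + 1) G).Adj A B then (φ A - φ B) ^ 2 else 0) := by
  set f : KSubset n (m + 1) → KSubset n (m + 1) → ℝ :=
    fun A B ↦ if (tokenGraph n (m + 1) G).Adj A B then (φ A - φ B) ^ 2 else 0
  have hcount : ∀ A B, ∑ x, (if x ∈ A.1 ∧ x ∈ B.1 then f A B else 0) = m * f A B := by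
    intro A B
    simp_rw [← mem_inter]
    rw [Fintype.sum_extend_by_zero, sum_const, nsmul_eq_mul]
    by_cases h : (tokenGraph n (m + 1) G).Adj A B
    · rw [((tokenGraph_adj_iff_s9 G A B).mp h).2.1, add_tsub_cancel_right]
    · simp [f, h]
  calc m * ∑ A, ∑ B, f A B = ∑ A, ∑ B, ∑ x, (if x ∈ A.1 ∧ x ∈ B.1 then f A B else 0) := by
        simp_rw [hcount, mul_sum]
    _ = ∑ A, ∑ x, ∑ B, (if x ∈ A.1 ∧ x ∈ B.1 then f A B else 0) :=
        sum_congr rfl fun A _ ↦ sum_comm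
    _ = ∑ x, ∑ A, ∑ B, (if x ∈ A.1 ∧ x ∈ B.1 then f A B else 0) := sum_comm
    _ = _ := (Fintype.sum_congr _ _ fun x ↦
        Fintype.sum_sum_subtype_eq_sum_sum_ite (fun A : KSubset n (m + 1) ↦ x ∈ A.1) f).symm

lemma KSubset.nonempty_of_le {k : ℕ} (h : k ≤ n) : Nonempty (KSubset n k) :=
  let ⟨t, _, ht⟩ := exists_subset_card_eq (s := univ) (by rwa [card_univ, Fintype.card_fin])
  ⟨⟨t, ht⟩⟩

lemma card_mul_dotProduct_lapTok_mulVec_le (G : SimpleGraph (Fin n))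
    (φ : KSubset n (m + 1) → ℝ) :
    m * (φ ⬝ᵥ (lapTok n (m + 1) G *ᵥ φ)) ≤ (m + 1) * lamMax (lapTok n m G) * (φ ⬝ᵥ φ) :=
  calc m * (φ ⬝ᵥ (lapTok n (m + 1) G *ᵥ φ))
      = (∑ x, ∑ A : {A : KSubset n (m + 1) // x ∈ A.1}, ∑ B : {B : KSubset n (m + 1) // x ∈ B.1},
          (if (tokenGraph n (m + 1) G).Adj A B then (φ A - φ B) ^ 2 else 0)) / 2 := by
        rw [lapTok, SimpleGraph.dotProduct_lapMatrix_mulVec, mul_div_assoc',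
          mul_sum_sum_adj_eq_sum_sum_adj_mem]
    _ ≤ ∑ x, tokenSlice φ x ⬝ᵥ (lapTok n m G *ᵥ tokenSlice φ x) := by
        simp_rw [lapTok, SimpleGraph.dotProduct_lapMatrix_mulVec]
        rw [← sum_div]
        gcongr with x
        exact sum_sum_adj_mem_le_tokenSlice G φ x
    _ ≤ ∑ x, lamMax (lapTok n m G) * (tokenSlice φ x ⬝ᵥ tokenSlice φ x) :=
        sum_le_sum fun x _ ↦
          ((tokenGraph n m G).isHermitian_lapMatrix ℝ).dotProduct_mulVec_le_lamMax_mul _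
    _ = (m + 1) * lamMax (lapTok n m G) * (φ ⬝ᵥ φ) := by
        rw [← mul_sum, sum_dotProduct_tokenSlice_self]
        ring

end

/-- `λ_max(L_k(G)) ≤ (k/(k-1)) λ_max(L_{k-1}(G))` for `2 ≤ k ≤ ⌊n/2⌋`. -/
theorem lamMax_token_step (n k : ℕ) (G : SimpleGraph (Fin n)) (hk : 2 ≤ k) (hkn : k ≤ n / 2) :
    lamMax (lapTok n k G) ≤ ((k : ℝ) / ((k : ℝ) - 1)) * lamMax (lapTok n (k - 1) G) := by
  obtain ⟨m, rfl⟩ : ∃ m, k = m + 1 := ⟨k - 1, by omega⟩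
  have hm : (0 : ℝ) < m := by exact_mod_cast (by omega : 0 < m)
  have : Nonempty (KSubset n (m + 1)) := KSubset.nonempty_of_le (by omega)
  have hL : (lapTok n (m + 1) G).IsHermitian := (tokenGraph n (m + 1) G).isHermitian_lapMatrix ℝ
  obtain ⟨φ, hφ, hφeig⟩ := hL.exists_mulVec_eq_lamMax_smul
  have hpos : 0 < φ ⬝ᵥ φ := by simpa using dotProduct_self_star_pos_iff.mpr hφ
  have key := card_mul_dotProduct_lapTok_mulVec_le G φ
  rw [hφeig, dotProduct_smul, smul_eq_mul] at key
  rw [add_tsub_cancel_right, Nat.cast_succ, add_sub_cancel_right, div_mul_eq_mul_div,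
    le_div_iff₀ hm]
  nlinarith
end

section
/- Let 1 ≤ k ≤ ⌊n/2⌋ and let φ ∈ ℝ^{C(n,k)} be nonzero with B_{n,k,k−1}ᵀ φ = 0. Then φ is an eigenvector of the Laplacian of the Johnson graph F_k(K_n) with eigenvalue k(n − k + 1). -/
open Finset Matrix

/-! Write `B = B_{n,k,k-1}`. The `(σ, τ)` entry of `B Bᵀ` counts the `(k-1)`-subsets of
`σ ∩ τ`, so `B Bᵀ = k I + A` with `A` the adjacency matrix of `J(n,k)`. Each row of `B` has `k`
ones and each column `n - k + 1`, so comparing row sums shows that `J(n,k)` is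
`k(n-k)`-regular. Hence `L = k(n-k+1) I - B Bᵀ`, which acts as that scalar on the kernel
of `Bᵀ`. -/

section Subsets

variable {α : Type*} [DecidableEq α]

theorem card_inter_lt_of_ne {s t : Finset α} {k : ℕ} (hs : #s = k) (ht : #t = k)
    (hst : s ≠ t) : #(s ∩ t) < k := by
  by_contra! hle
  have hss : s ∩ t = s := eq_of_subset_of_card_le inter_subset_left (hs ▸ hle)
  exact hst (eq_of_subset_of_card_le (inter_eq_left.mp hss) (hs ▸ ht ▸ le_rfl))

theorem card_symmDiff_eq_two {s t : Finset α} {k : ℕ} (hk : 1 ≤ k) (hs : #s = k) (ht : #t = k)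
    (hst : #(s ∩ t) = k - 1) : #(symmDiff s t) = 2 := by
  rw [symmDiff_def, sup_eq_union, card_union_of_disjoint disjoint_sdiff_sdiff, card_sdiff,
    card_sdiff, inter_comm, hs, ht, hst]
  omega

variable [Fintype α]

theorem card_filter_subset_eq_choose (s : Finset α) (l : ℕ) :
    #{η : {t : Finset α // #t = l} | η.1 ⊆ s} = (#s).choose l := by
  rw [← card_powersetCard]
  refine card_bij (fun η _ => η.1) (fun η hη => ?_) (fun _ _ _ _ => Subtype.ext)
    (fun t ht => ?_)
  · exact mem_powersetCard.mpr ⟨(mem_filter.mp hη).2, η.2⟩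
  · obtain ⟨hts, htl⟩ := mem_powersetCard.mp ht
    exact ⟨⟨t, htl⟩, mem_filter.mpr ⟨mem_univ _, hts⟩, rfl⟩

theorem card_filter_superset_of_card_add_one (s : Finset α) {k : ℕ} (hk : #s + 1 = k) :
    #{τ : {t : Finset α // #t = k} | s ⊆ τ.1} = Fintype.card α - #s := by
  rw [← card_compl]
  symm
  refine card_bij (fun a ha => ⟨insert a s, by rw [card_insert_of_notMem (mem_compl.mp ha), hk]⟩)
    (fun a _ => by simp [subset_insert]) (fun a ha b _ h => ?_) (fun τ hτ => ?_)
  · exact (insert_inj (mem_compl.mp ha)).mp (congrArg Subtype.val h)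
  · obtain ⟨a, ha, hτ⟩ := exists_eq_insert_iff.mpr ⟨(mem_filter.mp hτ).2, hk.trans τ.2.symm⟩
    exact ⟨a, mem_compl.mpr ha, Subtype.ext hτ⟩

end Subsets

theorem SimpleGraph.IsRegularOfDegree.lapMatrix_eq_smul_one_sub_adjMatrix {V : Type*}
    [Fintype V] [DecidableEq V] {G : SimpleGraph V} [DecidableRel G.Adj] {d : ℕ}
    (hd : G.IsRegularOfDegree d) (R : Type*) [Ring R] :
    G.lapMatrix R = (d : R) • 1 - G.adjMatrix R := by
  ext v w
  simp [SimpleGraph.lapMatrix, SimpleGraph.degMatrix, diagonal_apply, one_apply, hd v]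

theorem tokenGraph_top_adj_iff {n k : ℕ} (hk : 1 ≤ k) (σ τ : {s : Finset (Fin n) // #s = k}) :
    (tokenGraph n k ⊤).Adj σ τ ↔ σ ≠ τ ∧ #(σ.1 ∩ τ.1) = k - 1 := by
  rw [tokenGraph, SimpleGraph.fromRel_adj, inter_comm τ.1, symmDiff_comm τ.1, or_self]
  refine and_congr_right fun _ => and_iff_left_of_imp fun hst => ?_
  obtain ⟨u, v, huv, h⟩ := card_eq_two.mp (card_symmDiff_eq_two hk σ.2 τ.2 hst)
  exact ⟨u, v, huv, h⟩

section InclMatrix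

variable {n k : ℕ}

theorem inclMatrix_mul_transpose_apply (l : ℕ) (σ τ : {s : Finset (Fin n) // #s = k}) :
    (inclMatrix n k l * (inclMatrix n k l)ᵀ) σ τ = ((#(σ.1 ∩ τ.1)).choose l : ℝ) := by
  simp [inclMatrix, mul_apply, ← ite_and, ← subset_inter_iff, sum_boole,
    card_filter_subset_eq_choose, inter_comm σ.1]

theorem inclMatrix_mulVec_one (l : ℕ) : inclMatrix n k l *ᵥ 1 = (k.choose l : ℝ) • 1 := by
  ext σ
  simp [inclMatrix, mulVec, dotProduct, sum_boole, card_filter_subset_eq_choose, σ.2]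

theorem inclMatrix_transpose_mulVec_one {l : ℕ} (hl : l + 1 = k) :
    (inclMatrix n k l)ᵀ *ᵥ 1 = ((n - l : ℕ) : ℝ) • 1 := by
  ext η
  simp [inclMatrix, mulVec, dotProduct, sum_boole,
    card_filter_superset_of_card_add_one η.1 (η.2 ▸ hl), η.2]

theorem inclMatrix_mul_transpose (hk : 1 ≤ k) :
    inclMatrix n k (k - 1) * (inclMatrix n k (k - 1))ᵀ
      = (k : ℝ) • 1 + (tokenGraph n k ⊤).adjMatrix ℝ := by
  ext σ τ
  rw [inclMatrix_mul_transpose_apply, Matrix.add_apply, Matrix.smul_apply, one_apply,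
    SimpleGraph.adjMatrix_apply]
  simp only [tokenGraph_top_adj_iff hk]
  obtain rfl | hne := eq_or_ne σ τ
  · simp [σ.2, Nat.choose_symm hk]
  · have hlt := card_inter_lt_of_ne σ.2 τ.2 (Subtype.val_injective.ne hne)
    obtain h | h : #(σ.1 ∩ τ.1) = k - 1 ∨ #(σ.1 ∩ τ.1) < k - 1 := by omega
    · simp [hne, h]
    · simp [hne, h.ne, Nat.choose_eq_zero_of_lt h]

end InclMatrix

theorem tokenGraph_top_isRegularOfDegree {n k : ℕ} (hk : 1 ≤ k) :
    (tokenGraph n k ⊤).IsRegularOfDegree (k * (n - k)) := by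
  intro σ
  have hkn : k ≤ n := by simpa [σ.2] using card_le_univ σ.1
  have hrow : (inclMatrix n k (k - 1) * (inclMatrix n k (k - 1))ᵀ) *ᵥ 1
      = ((k : ℝ) • 1 + (tokenGraph n k ⊤).adjMatrix ℝ) *ᵥ 1 := by
    rw [inclMatrix_mul_transpose hk]
  rw [← mulVec_mulVec, inclMatrix_transpose_mulVec_one (Nat.sub_add_cancel hk), mulVec_smul,
    inclMatrix_mulVec_one, Nat.choose_symm hk, add_mulVec, smul_mulVec, one_mulVec] at hrow
  have hdeg : (n - k + 1) * k = k + (tokenGraph n k ⊤).degree σ := by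
    rw [show n - k + 1 = n - (k - 1) by omega]
    exact_mod_cast (by simpa using congrFun hrow σ :
      ((n - (k - 1) : ℕ) : ℝ) * k = k + (tokenGraph n k ⊤).degree σ)
  linarith [mul_comm (n - k) k]

theorem johnson_top_eigenvector_general (n k : ℕ) (hk : 1 ≤ k) (hkn : k ≤ n / 2)
    (φ : {s : Finset (Fin n) // s.card = k} → ℝ)
    (hker : (inclMatrix n k (k - 1))ᵀ *ᵥ φ = 0) :
    lapTok n k ⊤ *ᵥ φ = ((k : ℝ) * ((n : ℝ) - (k : ℝ) + 1)) • φ := by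
  have hlap : lapTok n k ⊤
      = ((k : ℝ) * ((n : ℝ) - (k : ℝ) + 1)) • 1
        - inclMatrix n k (k - 1) * (inclMatrix n k (k - 1))ᵀ := by
    rw [lapTok, (tokenGraph_top_isRegularOfDegree hk).lapMatrix_eq_smul_one_sub_adjMatrix,
      inclMatrix_mul_transpose hk]
    push_cast [Nat.cast_sub (show k ≤ n by omega)]
    module
  rw [hlap, sub_mulVec, smul_mulVec, one_mulVec, ← mulVec_mulVec, hker, mulVec_zero, sub_zero]

/-- A nonzero `φ` with `B_{n,k,k-1}ᵀ φ = 0` is an eigenvector of the Laplacian of the Johnson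
graph `F_k(K_n)` with eigenvalue `k(n - k + 1)`. -/
theorem johnson_top_eigenvector (n k : ℕ) (hk : 1 ≤ k) (hkn : k ≤ n / 2)
    (φ : {s : Finset (Fin n) // s.card = k} → ℝ) (hφ0 : φ ≠ 0)
    (hker : (inclMatrix n k (k - 1))ᵀ *ᵥ φ = 0) :
    lapTok n k ⊤ *ᵥ φ = ((k : ℝ) * ((n : ℝ) - (k : ℝ) + 1)) • φ :=
  johnson_top_eigenvector_general n k hk hkn φ hker
end
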